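/- For fixed binary x : N -> {0,1}, the Bertsimas-Sim reformulated constraint system is exactly equivalent to the robust constraint: there exist p_j >= 0 (j in N) and q >= 0 with sum_j d_j x_j + sum_j p_j + Gamma q <= s and q + p_j >= b_j x_j for all j, if and only if sum_j d_j x_j + max_{R subset N, |R| <= Gamma} sum_{j in R} b_j x_j <= s. -/

import Mathlib

/-! Weak duality is immediate: a set `R` with `|R| ≤ Γ` pays at most `p j + q` per element. For the
converse take `S` of size `Γ` maximising `∑ j ∈ S, v j`; by an exchange argument every value outside
`S` is below every value inside, so a threshold `q ≥ 0` separates them, and `p j = max (v j - q) 0`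
makes the dual objective equal to `∑ j ∈ S, v j`. -/

open Finset

/-- Worst-case (cardinality-constrained) extra term. -/
noncomputable def robustMax {ι : Type*} [DecidableEq ι] (N : Finset ι) (Γ : ℕ) (f : ι → ℝ) : ℝ :=
  (N.powerset.filter fun R => R.card ≤ Γ).sup' ⟨∅, by simp⟩ fun R => ∑ j ∈ R, f j

section Separation

variable {ι : Type*} [DecidableEq ι] {N S : Finset ι} {Γ : ℕ} {v : ι → ℝ}

theorem exists_nonneg_separating (hv : ∀ j ∈ N, 0 ≤ v j) (hSN : S ⊆ N)
    (hsep : ∀ i ∈ S, ∀ j ∈ N \ S, v j ≤ v i) :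
    ∃ q, 0 ≤ q ∧ (∀ j ∈ N \ S, v j ≤ q) ∧ ∀ i ∈ S, q ≤ v i := by
  by_cases hout : (N \ S).Nonempty
  · refine ⟨(N \ S).sup' hout v, ?_, fun j hj => le_sup' v hj, fun i hi => ?_⟩
    · obtain ⟨j, hj⟩ := hout
      exact (hv j (sdiff_subset hj)).trans (le_sup' v hj)
    · exact sup'_le hout v fun j hj => hsep i hi j hj
  · rw [not_nonempty_iff_eq_empty] at hout
    exact ⟨0, le_rfl, by simp [hout], fun i hi => hv i (hSN hi)⟩

theorem exists_card_eq_forall_le_of_mem_sdiff (hΓ : Γ ≤ N.card) :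
    ∃ S ⊆ N, S.card = Γ ∧ ∀ i ∈ S, ∀ j ∈ N \ S, v j ≤ v i := by
  obtain ⟨S, hS, hmax⟩ :=
    exists_max_image (powersetCard Γ N) (fun R => ∑ j ∈ R, v j) (powersetCard_nonempty.2 hΓ)
  obtain ⟨hSN, hSc⟩ := mem_powersetCard.1 hS
  refine ⟨S, hSN, hSc, fun i hi j hj => ?_⟩
  obtain ⟨hjN, hjS⟩ := mem_sdiff.1 hj
  have hji : j ∉ S.erase i := fun h => hjS (mem_of_mem_erase h)
  -- swapping `i` out for `j` gives another `Γ`-subset, whose sum cannot exceed that of `S`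
  have hswap := hmax (insert j (S.erase i)) <| mem_powersetCard.2
    ⟨insert_subset hjN ((erase_subset i S).trans hSN), by
      rw [card_insert_of_notMem hji, card_erase_of_mem hi, hSc]
      have := card_pos.2 ⟨i, hi⟩
      omega⟩
  rw [sum_insert hji, sum_erase_eq_sub hi] at hswap
  linarith

theorem sum_max_sub_eq_of_separating {q : ℝ} (hSN : S ⊆ N) (hout : ∀ j ∈ N \ S, v j ≤ q)
    (hin : ∀ i ∈ S, q ≤ v i) :
    ∑ j ∈ N, max (v j - q) 0 = ∑ j ∈ S, v j - S.card * q := by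
  calc ∑ j ∈ N, max (v j - q) 0 = ∑ j ∈ S, max (v j - q) 0 := by
        refine (sum_subset hSN fun j hjN hjS => ?_).symm
        exact max_eq_right (sub_nonpos.2 (hout j (mem_sdiff.2 ⟨hjN, hjS⟩)))
    _ = ∑ j ∈ S, (v j - q) := sum_congr rfl fun i hi => max_eq_left (sub_nonneg.2 (hin i hi))
    _ = ∑ j ∈ S, v j - S.card * q := by rw [sum_sub_distrib, sum_const, nsmul_eq_mul]

end Separation

section RobustMax

variable {ι : Type*} [DecidableEq ι] {N : Finset ι} {Γ : ℕ} {v : ι → ℝ}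

theorem robustMax_le_iff {c : ℝ} :
    robustMax N Γ v ≤ c ↔ ∀ R ⊆ N, R.card ≤ Γ → ∑ j ∈ R, v j ≤ c := by
  refine (Finset.sup'_le_iff _ _).trans ?_
  simp

theorem sum_le_robustMax {R : Finset ι} (hRN : R ⊆ N) (hR : R.card ≤ Γ) :
    ∑ j ∈ R, v j ≤ robustMax N Γ v :=
  Finset.le_sup' (fun R => ∑ j ∈ R, v j) (by simp [hRN, hR])

theorem robustMax_le_sum_add_mul {p : ι → ℝ} {q : ℝ} (hp : ∀ j ∈ N, 0 ≤ p j) (hq : 0 ≤ q)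
    (hpq : ∀ j ∈ N, v j ≤ q + p j) : robustMax N Γ v ≤ ∑ j ∈ N, p j + Γ * q := by
  refine robustMax_le_iff.2 fun R hRN hR => ?_
  calc ∑ j ∈ R, v j ≤ ∑ j ∈ R, (q + p j) := sum_le_sum fun j hj => hpq j (hRN hj)
    _ = R.card * q + ∑ j ∈ R, p j := by rw [sum_add_distrib, sum_const, nsmul_eq_mul]
    _ ≤ Γ * q + ∑ j ∈ N, p j := by
      gcongr
      exact fun j hj _ => hp j hj
    _ = ∑ j ∈ N, p j + Γ * q := add_comm _ _

theorem exists_sum_max_sub_add_mul_le_robustMax (hΓ : Γ ≤ N.card) (hv : ∀ j ∈ N, 0 ≤ v j) :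
    ∃ q, 0 ≤ q ∧ ∑ j ∈ N, max (v j - q) 0 + Γ * q ≤ robustMax N Γ v := by
  obtain ⟨S, hSN, hSc, hsep⟩ := exists_card_eq_forall_le_of_mem_sdiff hΓ
  obtain ⟨q, hq, hout, hin⟩ := exists_nonneg_separating hv hSN hsep
  refine ⟨q, hq, ?_⟩
  rw [sum_max_sub_eq_of_separating hSN hout hin, hSc, sub_add_cancel]
  exact sum_le_robustMax hSN hSc.le

end RobustMax

theorem stmt15_general {ι : Type*} [DecidableEq ι] (N : Finset ι) (d b : ι → ℝ)
    (hb : ∀ j ∈ N, 0 ≤ b j)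
    (Γ : ℕ) (hΓ : Γ ≤ N.card) (s : ℝ)
    (x : ι → ℝ) (hx : ∀ j ∈ N, x j = 0 ∨ x j = 1) :
    (∃ p : ι → ℝ, ∃ q : ℝ, (∀ j ∈ N, 0 ≤ p j) ∧ 0 ≤ q ∧
        (∀ j ∈ N, b j * x j ≤ q + p j) ∧
        ∑ j ∈ N, d j * x j + ∑ j ∈ N, p j + (Γ : ℝ) * q ≤ s) ↔
      ∑ j ∈ N, d j * x j + robustMax N Γ (fun j => b j * x j) ≤ s := by
  constructor
  · rintro ⟨p, q, hp, hq, hpq, hs⟩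
    linarith [robustMax_le_sum_add_mul (Γ := Γ) hp hq hpq]
  · intro hs
    have hv : ∀ j ∈ N, 0 ≤ b j * x j := fun j hj =>
      mul_nonneg (hb j hj) (by rcases hx j hj with h | h <;> simp [h])
    obtain ⟨q, hq, hdual⟩ := exists_sum_max_sub_add_mul_le_robustMax hΓ hv
    refine ⟨fun j => max (b j * x j - q) 0, q, fun j _ => le_max_right _ _, hq,
      fun j _ => ?_, by linarith⟩
    linarith [le_max_left (b j * x j - q) 0]

/-- For a fixed binary `x`, the Bertsimas–Sim auxiliary system is satisfiable
iff the robust constraint holds. -/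
theorem stmt15 {ι : Type*} [DecidableEq ι] (N : Finset ι) (d b : ι → ℝ)
    (hd : ∀ j ∈ N, 0 ≤ d j) (hb : ∀ j ∈ N, 0 ≤ b j)
    (Γ : ℕ) (hΓ : Γ ≤ N.card) (s : ℝ)
    (x : ι → ℝ) (hx : ∀ j ∈ N, x j = 0 ∨ x j = 1) :
    (∃ p : ι → ℝ, ∃ q : ℝ, (∀ j ∈ N, 0 ≤ p j) ∧ 0 ≤ q ∧
        (∀ j ∈ N, b j * x j ≤ q + p j) ∧
        ∑ j ∈ N, d j * x j + ∑ j ∈ N, p j + (Γ : ℝ) * q ≤ s) ↔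
      ∑ j ∈ N, d j * x j + robustMax N Γ (fun j => b j * x j) ≤ s :=
  stmt15_general N d b hb Γ hΓ s x hx
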